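/- Let f : 𝔻 → 𝔻 be holomorphic with f(z) = z + o(|1-z|³) as z → 1 in 𝔻 (unrestricted approach, i.e. (f(z)-z)/|1-z|³ → 0 as z → 1 in 𝔻). Then f(z) = z for all z ∈ 𝔻. -/

import Mathlib

/-!
Along the radius `r ↑ 1` the hypothesis reads `f r = r + o((1 - r)³)`. In particular
`(1 - |f r|²) / (1 - r²) → 1`, so letting `a = r → 1` in the Schwarz–Pick inequality gives Julia's
inequality `Re C(z) ≤ Re C(f z)` for the Cayley transform `C w = (1 + w) / (1 - w)`. Thus
`P = C ∘ f - C` has nonnegative real part, while `P r = o(1 - r)`. If `Re P(0) = 0`, the maximum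
principle makes `P` constant; if `Re P(0) > 0`, the Schwarz lemma applied to
`(P - P(0)) / (P + conj P(0))` gives the Harnack bound
`(1 - |w|²) |P w + conj P(0)|² ≤ 4 Re P(w) Re P(0)`. Either way `P r = o(1 - r)` forces `P = 0`,
i.e. `f = id`.
-/

open Complex Filter MeasureTheory Metric Set Topology

noncomputable section

/-- The open unit disk in `ℂ`. -/
def unitDisk : Set ℂ := {z : ℂ | ‖z‖ < 1}

/-- The Laplacian of a real-valued function on `ℂ ≅ ℝ²`. -/
def lap (u : ℂ → ℝ) (z : ℂ) : ℝ :=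
  fderiv ℝ (fun w => fderiv ℝ u w 1) z 1 +
  fderiv ℝ (fun w => fderiv ℝ u w Complex.I) z Complex.I

/-- The Gauss curvature `κ_λ = -Δ(log λ)/λ²` of a conformal pseudometric `λ(z)|dz|`. -/
def curv (lam : ℂ → ℝ) (z : ℂ) : ℝ :=
  -(lap (fun w => Real.log (lam w)) z) / (lam z) ^ 2

/-- A conformal pseudometric on the unit disk: continuous, nonnegative, and C² where positive. -/
structure IsConfPseudometric (lam : ℂ → ℝ) : Prop where
  cont : ContinuousOn lam unitDisk
  nonneg : ∀ z ∈ unitDisk, 0 ≤ lam z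
  smooth : ContDiffOn ℝ 2 lam {z : ℂ | z ∈ unitDisk ∧ 0 < lam z}

open ComplexConjugate

lemma unitDisk_eq_ball : unitDisk = ball (0 : ℂ) 1 := by
  ext z; simp [unitDisk]

lemma mem_unitDisk_iff_normSq_lt_one {z : ℂ} : z ∈ unitDisk ↔ normSq z < 1 := by
  rw [unitDisk, mem_ofPred_eq, ← Complex.sq_norm, sq_lt_one_iff₀ (norm_nonneg z)]

lemma one_sub_normSq_pos {z : ℂ} (hz : z ∈ unitDisk) : 0 < 1 - normSq z :=
  sub_pos.2 (mem_unitDisk_iff_normSq_lt_one.1 hz)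

lemma zero_mem_unitDisk : (0 : ℂ) ∈ unitDisk := by simp [unitDisk]

lemma ne_one_of_mem_unitDisk {z : ℂ} (hz : z ∈ unitDisk) : z ≠ 1 := by
  rintro rfl; simp [unitDisk] at hz

lemma isOpen_unitDisk : IsOpen unitDisk := unitDisk_eq_ball ▸ isOpen_ball

lemma isPreconnected_unitDisk : IsPreconnected unitDisk :=
  unitDisk_eq_ball ▸ (convex_ball 0 1).isPreconnected

lemma norm_le_norm_iff_normSq_le {x y : ℂ} : ‖x‖ ≤ ‖y‖ ↔ normSq x ≤ normSq y := by
  rw [← Complex.sq_norm, ← Complex.sq_norm, sq_le_sq₀ (norm_nonneg x) (norm_nonneg y)]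

lemma normSq_add_conj_sub_normSq_sub (x a : ℂ) :
    normSq (x + conj a) - normSq (x - a) = 4 * x.re * a.re := by
  simp [normSq_apply]; ring

lemma normSq_sub_le_normSq_add_conj {x a : ℂ} (hx : 0 ≤ x.re) (ha : 0 ≤ a.re) :
    normSq (x - a) ≤ normSq (x + conj a) := by
  nlinarith [normSq_add_conj_sub_normSq_sub x a, mul_nonneg hx ha]

lemma add_conj_ne_zero {x a : ℂ} (hx : 0 ≤ x.re) (ha : 0 < a.re) : x + conj a ≠ 0 := fun h => by
  have := congrArg re h
  simp only [add_re, conj_re, zero_re] at this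
  linarith

lemma norm_le_norm_of_mapsTo_unitDisk {g : ℂ → ℂ} (hg : DifferentiableOn ℂ g unitDisk)
    (hmaps : MapsTo g unitDisk (closedBall 0 1)) (hg0 : g 0 = 0) {z : ℂ} (hz : z ∈ unitDisk) :
    ‖g z‖ ≤ ‖z‖ := by
  rw [unitDisk_eq_ball] at hg hmaps
  exact Complex.norm_le_norm_of_mapsTo_ball hg hmaps hg0 hz

def mob (a z : ℂ) : ℂ := (a - z) / (1 - conj a * z)

lemma normSq_one_sub_conj_mul_sub_normSq_sub (a z : ℂ) :
    normSq (1 - conj a * z) - normSq (a - z) = (1 - normSq a) * (1 - normSq z) := by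
  simp [normSq_apply]; ring

section Mobius

variable {a z : ℂ}

lemma normSq_one_sub_conj_mul_pos (ha : a ∈ unitDisk) (hz : z ∈ unitDisk) :
    0 < normSq (1 - conj a * z) := by
  have := mul_pos (one_sub_normSq_pos ha) (one_sub_normSq_pos hz)
  linarith [normSq_one_sub_conj_mul_sub_normSq_sub a z, normSq_nonneg (a - z)]

lemma one_sub_conj_mul_ne_zero (ha : a ∈ unitDisk) (hz : z ∈ unitDisk) :
    1 - conj a * z ≠ 0 :=
  normSq_pos.1 (normSq_one_sub_conj_mul_pos ha hz)

lemma one_sub_normSq_mob (ha : a ∈ unitDisk) (hz : z ∈ unitDisk) :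
    1 - normSq (mob a z) = (1 - normSq a) * (1 - normSq z) / normSq (1 - conj a * z) := by
  rw [mob, normSq_div, eq_div_iff (normSq_one_sub_conj_mul_pos ha hz).ne', sub_mul,
    div_mul_cancel₀ _ (normSq_one_sub_conj_mul_pos ha hz).ne']
  linarith [normSq_one_sub_conj_mul_sub_normSq_sub a z]

lemma mob_mapsTo (ha : a ∈ unitDisk) : MapsTo (mob a) unitDisk unitDisk := fun z hz => by
  have hpos : 0 < 1 - normSq (mob a z) := by
    rw [one_sub_normSq_mob ha hz]
    exact div_pos (mul_pos (one_sub_normSq_pos ha) (one_sub_normSq_pos hz))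
      (normSq_one_sub_conj_mul_pos ha hz)
  exact mem_unitDisk_iff_normSq_lt_one.2 (by linarith)

lemma mob_mob (ha : a ∈ unitDisk) (hz : z ∈ unitDisk) : mob a (mob a z) = z := by
  have hz' := one_sub_conj_mul_ne_zero ha hz
  have ha' := one_sub_conj_mul_ne_zero ha ha
  have hden : 1 - conj a * mob a z = (1 - conj a * a) / (1 - conj a * z) := by
    rw [mob]; field_simp; ring
  rw [mob, hden, div_div_eq_mul_div, sub_mul, mob, div_mul_cancel₀ _ hz', div_eq_iff ha']
  ring

lemma differentiableOn_mob (ha : a ∈ unitDisk) : DifferentiableOn ℂ (mob a) unitDisk :=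
  DifferentiableOn.div (by fun_prop) (by fun_prop) fun _ hz => one_sub_conj_mul_ne_zero ha hz

end Mobius

section SchwarzPick

variable {f : ℂ → ℂ}

theorem norm_mob_le_of_mapsTo (hf : DifferentiableOn ℂ f unitDisk)
    (hmaps : MapsTo f unitDisk unitDisk) {a z : ℂ} (ha : a ∈ unitDisk) (hz : z ∈ unitDisk) :
    ‖mob (f a) (f z)‖ ≤ ‖mob a z‖ := by
  have hg : DifferentiableOn ℂ (mob (f a) ∘ f ∘ mob a) unitDisk :=
    (differentiableOn_mob (hmaps ha)).comp (hf.comp (differentiableOn_mob ha) (mob_mapsTo ha))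
      (hmaps.comp (mob_mapsTo ha))
  have hgmaps : MapsTo (mob (f a) ∘ f ∘ mob a) unitDisk (closedBall 0 1) :=
    ((mob_mapsTo (hmaps ha)).comp (hmaps.comp (mob_mapsTo ha))).mono_right
      (unitDisk_eq_ball ▸ ball_subset_closedBall)
  have hg0 : (mob (f a) ∘ f ∘ mob a) 0 = 0 := by simp [mob]
  simpa [mob_mob ha hz] using
    norm_le_norm_of_mapsTo_unitDisk hg hgmaps hg0 (mob_mapsTo ha hz)

theorem schwarz_pick_normSq (hf : DifferentiableOn ℂ f unitDisk)
    (hmaps : MapsTo f unitDisk unitDisk) {a z : ℂ} (ha : a ∈ unitDisk) (hz : z ∈ unitDisk) :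
    (1 - normSq a) * (1 - normSq z) * normSq (1 - conj (f a) * f z)
      ≤ (1 - normSq (f a)) * (1 - normSq (f z)) * normSq (1 - conj a * z) := by
  have h := norm_le_norm_iff_normSq_le.1 (norm_mob_le_of_mapsTo hf hmaps ha hz)
  have h' : 1 - normSq (mob a z) ≤ 1 - normSq (mob (f a) (f z)) := by linarith
  rwa [one_sub_normSq_mob ha hz, one_sub_normSq_mob (hmaps ha) (hmaps hz),
    div_le_div_iff₀ (normSq_one_sub_conj_mul_pos ha hz)
      (normSq_one_sub_conj_mul_pos (hmaps ha) (hmaps hz))] at h'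

end SchwarzPick

lemma abs_one_sub_normSq_div_sub_one_le {u v : ℂ} (hu : u ∈ unitDisk) (hv : v ∈ unitDisk) :
    |(1 - normSq v) / (1 - normSq u) - 1| ≤ ‖v - u‖ / (1 - ‖u‖) := by
  have hu' : ‖u‖ < 1 := hu
  have hv' : ‖v‖ < 1 := hv
  have hpos : 0 < 1 - ‖u‖ := sub_pos.2 hu'
  have hpos' : 1 - ‖u‖ ^ 2 ≠ 0 := by nlinarith [norm_nonneg u]
  have hfactor : (1 - ‖v‖ ^ 2) / (1 - ‖u‖ ^ 2) - 1
      = (‖u‖ - ‖v‖) / (1 - ‖u‖) * ((‖u‖ + ‖v‖) / (1 + ‖u‖)) := by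
    field_simp
    ring
  rw [← Complex.sq_norm, ← Complex.sq_norm, hfactor, abs_mul, abs_div, abs_of_pos hpos,
    abs_of_nonneg (by positivity : (0 : ℝ) ≤ (‖u‖ + ‖v‖) / (1 + ‖u‖)),
    ← mul_one (‖v - u‖ / (1 - ‖u‖)), abs_sub_comm]
  gcongr
  · exact abs_norm_sub_norm_le v u
  · rw [div_le_one (by positivity)]; linarith

lemma tendsto_one_sub_normSq_div_one_sub_normSq {ι : Type*} {l : Filter ι} {u v : ι → ℂ}
    (hu : ∀ᶠ i in l, u i ∈ unitDisk) (hv : ∀ᶠ i in l, v i ∈ unitDisk)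
    (huv : Tendsto (fun i => ‖v i - u i‖ / (1 - ‖u i‖)) l (𝓝 0)) :
    Tendsto (fun i => (1 - normSq (v i)) / (1 - normSq (u i))) l (𝓝 1) := by
  rw [tendsto_iff_norm_sub_tendsto_zero]
  refine squeeze_zero' (Eventually.of_forall fun _ => norm_nonneg _) ?_ huv
  filter_upwards [hu, hv] with i hui hvi
  exact abs_one_sub_normSq_div_sub_one_le hui hvi

theorem julia_normSq {f : ℂ → ℂ} (hf : DifferentiableOn ℂ f unitDisk)
    (hmaps : MapsTo f unitDisk unitDisk) {ι : Type*} {l : Filter ι} [l.NeBot] {u : ι → ℂ}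
    (hu : ∀ᶠ i in l, u i ∈ unitDisk) (hu1 : Tendsto u l (𝓝 1))
    (hfu1 : Tendsto (fun i => f (u i)) l (𝓝 1)) {α : ℝ}
    (hα : Tendsto (fun i => (1 - normSq (f (u i))) / (1 - normSq (u i))) l (𝓝 α))
    {w : ℂ} (hw : w ∈ unitDisk) :
    (1 - normSq w) * normSq (1 - f w) ≤ α * ((1 - normSq (f w)) * normSq (1 - w)) := by
  have hL : Tendsto (fun i => (1 - normSq w) * normSq (1 - conj (f (u i)) * f w)) l
      (𝓝 ((1 - normSq w) * normSq (1 - f w))) := by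
    simpa [Function.comp_def] using ((by fun_prop : Continuous fun x : ℂ =>
      (1 - normSq w) * normSq (1 - conj x * f w)).tendsto 1).comp hfu1
  have hR : Tendsto (fun i => (1 - normSq (f (u i))) / (1 - normSq (u i))
      * ((1 - normSq (f w)) * normSq (1 - conj (u i) * w))) l
      (𝓝 (α * ((1 - normSq (f w)) * normSq (1 - w)))) := by
    refine hα.mul ?_
    simpa [Function.comp_def] using ((by fun_prop : Continuous fun x : ℂ =>
      (1 - normSq (f w)) * normSq (1 - conj x * w)).tendsto 1).comp hu1
  refine le_of_tendsto_of_tendsto hL hR ?_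
  filter_upwards [hu] with i hi
  rw [div_mul_eq_mul_div, le_div_iff₀ (one_sub_normSq_pos hi)]
  linarith [schwarz_pick_normSq hf hmaps hi hw]

lemma ofReal_mem_unitDisk {r : ℝ} (h0 : 0 ≤ r) (h1 : r < 1) : (r : ℂ) ∈ unitDisk := by
  simp [unitDisk, abs_of_nonneg h0, h1]

lemma eventually_ofReal_mem_unitDisk : ∀ᶠ r : ℝ in 𝓝[<] 1, (r : ℂ) ∈ unitDisk :=
  Filter.mem_of_superset (Ioo_mem_nhdsLT one_pos) fun _ hr => ofReal_mem_unitDisk hr.1.le hr.2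

lemma tendsto_ofReal_nhdsLT_one : Tendsto (fun r : ℝ => (r : ℂ)) (𝓝[<] 1) (𝓝[unitDisk] 1) :=
  tendsto_nhdsWithin_iff.2
    ⟨by simpa using (continuous_ofReal.tendsto 1).mono_left nhdsWithin_le_nhds,
      eventually_ofReal_mem_unitDisk⟩

lemma tendsto_one_sub_ofReal_nhdsLT_one :
    Tendsto (fun r : ℝ => 1 - (r : ℂ)) (𝓝[<] 1) (𝓝 0) := by
  simpa using (tendsto_const_nhds (x := (1 : ℂ))).sub
    (tendsto_ofReal_nhdsLT_one.mono_right nhdsWithin_le_nhds)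

lemma norm_one_sub_ofReal {r : ℝ} (hr : r ≤ 1) : ‖1 - (r : ℂ)‖ = 1 - r := by
  rw [← ofReal_one, ← ofReal_sub, norm_real, Real.norm_of_nonneg (sub_nonneg.2 hr)]

section ReNonneg

variable {P : ℂ → ℂ}

theorem eq_of_re_nonneg_of_re_eq_zero (hP : DifferentiableOn ℂ P unitDisk)
    (hre : ∀ z ∈ unitDisk, 0 ≤ (P z).re) (h0 : (P 0).re = 0) {z : ℂ} (hz : z ∈ unitDisk) :
    P z = P 0 := by
  have hden : ∀ w ∈ unitDisk, P w + 1 ≠ 0 := fun w hw => by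
    simpa using add_conj_ne_zero (hre w hw) (a := 1) (by simp)
  set k : ℂ → ℂ := fun w => (P w - 1) / (P w + 1)
  have hk : DifferentiableOn ℂ k unitDisk := (hP.sub_const 1).div (hP.add_const 1) hden
  have hk_norm (w : ℂ) (hw : w ∈ unitDisk) : ‖k w‖ ≤ ‖k 0‖ := by
    have h1 : ‖k 0‖ = 1 := by
      rw [norm_div, div_eq_one_iff_eq (norm_ne_zero_iff.2 (hden 0 zero_mem_unitDisk)),
        ← sq_eq_sq₀ (norm_nonneg _) (norm_nonneg _), Complex.sq_norm, Complex.sq_norm]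
      have := normSq_add_conj_sub_normSq_sub (P 0) 1
      rw [map_one, h0] at this
      linarith
    rw [h1, norm_div, div_le_one (norm_pos_iff.2 (hden w hw)), norm_le_norm_iff_normSq_le]
    simpa using normSq_sub_le_normSq_add_conj (hre w hw) (a := 1) (by simp)
  have hkz : k z = k 0 := Complex.eqOn_of_isPreconnected_of_isMaxOn_norm isPreconnected_unitDisk
    isOpen_unitDisk hk zero_mem_unitDisk (isMaxOn_iff.2 hk_norm) hz
  rw [div_eq_div_iff (hden z hz) (hden 0 zero_mem_unitDisk)] at hkz
  linear_combination hkz / 2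

theorem one_sub_normSq_mul_normSq_add_conj_le (hP : DifferentiableOn ℂ P unitDisk)
    (hre : ∀ z ∈ unitDisk, 0 ≤ (P z).re) (h0 : 0 < (P 0).re) {w : ℂ} (hw : w ∈ unitDisk) :
    (1 - normSq w) * normSq (P w + conj (P 0)) ≤ 4 * (P w).re * (P 0).re := by
  have hden (z : ℂ) (hz : z ∈ unitDisk) : P z + conj (P 0) ≠ 0 := add_conj_ne_zero (hre z hz) h0
  set h : ℂ → ℂ := fun z => (P z - P 0) / (P z + conj (P 0))
  have hdiff : DifferentiableOn ℂ h unitDisk := (hP.sub_const _).div (hP.add_const _) hden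
  have hmaps : MapsTo h unitDisk (closedBall 0 1) := fun z hz => by
    rw [mem_closedBall_zero_iff, norm_div, div_le_one (norm_pos_iff.2 (hden z hz)),
      norm_le_norm_iff_normSq_le]
    exact normSq_sub_le_normSq_add_conj (hre z hz) h0.le
  have hschwarz := norm_le_norm_iff_normSq_le.1
    (norm_le_norm_of_mapsTo_unitDisk hdiff hmaps (by simp [h]) hw)
  rw [normSq_div, div_le_iff₀ (normSq_pos.2 (hden w hw))] at hschwarz
  linarith [normSq_add_conj_sub_normSq_sub (P w) (P 0)]

lemma normSq_add_conj_le_of_re_nonneg (hP : DifferentiableOn ℂ P unitDisk)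
    (hre : ∀ z ∈ unitDisk, 0 ≤ (P z).re) (h0 : 0 < (P 0).re) {r : ℝ} (hr : r ∈ Ioo 0 1) :
    normSq (P r + conj (P 0)) ≤ 4 * (P 0).re * ‖P r / (1 - r)‖ := by
  have hH := one_sub_normSq_mul_normSq_add_conj_le hP hre h0 (ofReal_mem_unitDisk hr.1.le hr.2)
  have hr1 : 0 < 1 - r := sub_pos.2 hr.2
  have h1r : 1 - r ≤ 1 - r * r := by nlinarith [hr.1, hr.2]
  rw [normSq_ofReal] at hH
  rw [norm_div, norm_one_sub_ofReal hr.2.le, mul_div_assoc', le_div_iff₀ hr1]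
  nlinarith [mul_le_mul_of_nonneg_right h1r (normSq_nonneg (P r + conj (P 0))),
    mul_le_mul_of_nonneg_left (re_le_norm (P r)) (by positivity : 0 ≤ 4 * (P 0).re)]

theorem eq_zero_of_re_nonneg_of_tendsto (hP : DifferentiableOn ℂ P unitDisk)
    (hre : ∀ z ∈ unitDisk, 0 ≤ (P z).re)
    (hlim : Tendsto (fun r : ℝ => P r / (1 - r)) (𝓝[<] 1) (𝓝 0)) {z : ℂ} (hz : z ∈ unitDisk) :
    P z = 0 := by
  have hIoo : ∀ᶠ r : ℝ in 𝓝[<] 1, r ∈ Ioo 0 1 := Ioo_mem_nhdsLT one_pos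
  have hP1 : Tendsto (fun r : ℝ => P r) (𝓝[<] 1) (𝓝 0) := by
    have h : Tendsto (fun r : ℝ => P r / (1 - r) * (1 - r)) (𝓝[<] 1) (𝓝 0) := by
      simpa using hlim.mul tendsto_one_sub_ofReal_nhdsLT_one
    refine h.congr' ?_
    filter_upwards [hIoo] with r hr
    exact div_mul_cancel₀ _ (sub_ne_zero.2 (by exact_mod_cast hr.2.ne'))
  rcases (hre 0 zero_mem_unitDisk).eq_or_lt with h0 | h0
  · have hP0 : P 0 = 0 := tendsto_nhds_unique (tendsto_const_nhds.congr'
      (eventually_ofReal_mem_unitDisk.mono fun r hr =>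
        (eq_of_re_nonneg_of_re_eq_zero hP hre h0.symm hr).symm)) hP1
    rw [eq_of_re_nonneg_of_re_eq_zero hP hre h0.symm hz, hP0]
  · exfalso
    have hbound : ∀ᶠ r : ℝ in 𝓝[<] 1,
        normSq (P r + conj (P 0)) ≤ 4 * (P 0).re * ‖P r / (1 - r)‖ :=
      hIoo.mono fun r hr => normSq_add_conj_le_of_re_nonneg hP hre h0 hr
    have hL : Tendsto (fun r : ℝ => normSq (P r + conj (P 0))) (𝓝[<] 1)
        (𝓝 (normSq (P 0))) := by
      simpa [Function.comp_def] using
        ((continuous_normSq.comp (continuous_add_const (conj (P 0)))).tendsto 0).comp hP1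
    have hR : Tendsto (fun r : ℝ => 4 * (P 0).re * ‖P r / (1 - r)‖) (𝓝[<] 1) (𝓝 0) := by
      simpa using (hlim.norm).const_mul (4 * (P 0).re)
    have hP0 : P 0 = 0 :=
      normSq_eq_zero.1 ((le_of_tendsto_of_tendsto hL hR hbound).antisymm (normSq_nonneg _))
    simp [hP0] at h0

end ReNonneg

def cayley (w : ℂ) : ℂ := (1 + w) / (1 - w)

lemma re_cayley (w : ℂ) : (cayley w).re = (1 - normSq w) / normSq (1 - w) := by
  rw [cayley, div_re, ← add_div]
  congr 1
  simp [normSq_apply]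
  ring

lemma cayley_sub_cayley {w z : ℂ} (hw : w ≠ 1) (hz : z ≠ 1) :
    cayley w - cayley z = 2 * (w - z) / ((1 - w) * (1 - z)) := by
  have hw' : 1 - w ≠ 0 := sub_ne_zero.2 hw.symm
  have hz' : 1 - z ≠ 0 := sub_ne_zero.2 hz.symm
  rw [cayley, cayley]
  field_simp
  ring

lemma cayley_inj {w z : ℂ} (hw : w ≠ 1) (hz : z ≠ 1) : cayley w = cayley z ↔ w = z := by
  rw [← sub_eq_zero, cayley_sub_cayley hw hz, div_eq_zero_iff, mul_eq_zero, sub_eq_zero]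
  simp [sub_eq_zero, hw.symm, hz.symm]

lemma differentiableOn_cayley : DifferentiableOn ℂ cayley unitDisk :=
  DifferentiableOn.div (by fun_prop) (by fun_prop) fun _ hz =>
    sub_ne_zero.2 (ne_one_of_mem_unitDisk hz).symm

section Radial

variable {f : ℂ → ℂ} {E : ℝ → ℂ}

lemma exists_radial_remainder
    (ho : Tendsto (fun z => (f z - z) / ((‖1 - z‖ : ℂ)) ^ 3) (𝓝[unitDisk] 1) (𝓝 0)) :
    ∃ E : ℝ → ℂ, Tendsto E (𝓝[<] 1) (𝓝 0) ∧
      ∀ᶠ r : ℝ in 𝓝[<] 1, f r - r = E r * (1 - r) ^ 3 := by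
  have hlt : ∀ᶠ r : ℝ in 𝓝[<] 1, r < 1 := self_mem_nhdsWithin
  refine ⟨fun r => (f r - r) / (1 - r) ^ 3, (ho.comp tendsto_ofReal_nhdsLT_one).congr' ?_, ?_⟩
  · filter_upwards [hlt] with r hr
    simp only [Function.comp, norm_one_sub_ofReal hr.le, ofReal_sub, ofReal_one]
  · filter_upwards [hlt] with r hr
    exact (div_mul_cancel₀ _ (pow_ne_zero 3 (sub_ne_zero.2 (by exact_mod_cast hr.ne')))).symm

lemma tendsto_comp_ofReal_of_remainder (hE : Tendsto E (𝓝[<] 1) (𝓝 0))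
    (hfE : ∀ᶠ r : ℝ in 𝓝[<] 1, f r - r = E r * (1 - r) ^ 3) :
    Tendsto (fun r : ℝ => f r) (𝓝[<] 1) (𝓝 1) := by
  have h : Tendsto (fun r : ℝ => E r * (1 - r) ^ 3 + r) (𝓝[<] 1) (𝓝 1) := by
    simpa using (hE.mul (tendsto_one_sub_ofReal_nhdsLT_one.pow 3)).add
      (tendsto_ofReal_nhdsLT_one.mono_right nhdsWithin_le_nhds)
  exact h.congr' (hfE.mono fun r hr => by rw [← hr, sub_add_cancel])

lemma tendsto_one_sub_normSq_div_of_remainder (hmaps : MapsTo f unitDisk unitDisk)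
    (hE : Tendsto E (𝓝[<] 1) (𝓝 0)) (hfE : ∀ᶠ r : ℝ in 𝓝[<] 1, f r - r = E r * (1 - r) ^ 3) :
    Tendsto (fun r : ℝ => (1 - normSq (f r)) / (1 - normSq (r : ℂ))) (𝓝[<] 1) (𝓝 1) := by
  refine tendsto_one_sub_normSq_div_one_sub_normSq eventually_ofReal_mem_unitDisk
    (eventually_ofReal_mem_unitDisk.mono fun r hr => hmaps hr) ?_
  have h : Tendsto (fun r : ℝ => ‖E r * (1 - r) ^ 2‖) (𝓝[<] 1) (𝓝 0) := by
    simpa using (hE.mul (tendsto_one_sub_ofReal_nhdsLT_one.pow 2)).norm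
  refine h.congr' ?_
  filter_upwards [Ioo_mem_nhdsLT one_pos, hfE] with r hr hr'
  rw [hr', norm_mul, norm_mul, norm_pow, norm_pow, norm_one_sub_ofReal hr.2.le, norm_real,
    Real.norm_of_nonneg hr.1.le, eq_div_iff (sub_pos.2 hr.2).ne']
  ring

theorem re_cayley_le_re_cayley_of_remainder (hf : DifferentiableOn ℂ f unitDisk)
    (hmaps : MapsTo f unitDisk unitDisk) (hE : Tendsto E (𝓝[<] 1) (𝓝 0))
    (hfE : ∀ᶠ r : ℝ in 𝓝[<] 1, f r - r = E r * (1 - r) ^ 3) {z : ℂ} (hz : z ∈ unitDisk) :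
    (cayley z).re ≤ (cayley (f z)).re := by
  have hjulia := julia_normSq hf hmaps eventually_ofReal_mem_unitDisk
    (tendsto_ofReal_nhdsLT_one.mono_right nhdsWithin_le_nhds)
    (tendsto_comp_ofReal_of_remainder hE hfE)
    (tendsto_one_sub_normSq_div_of_remainder hmaps hE hfE) hz
  rw [re_cayley, re_cayley, div_le_div_iff₀
    (normSq_pos.2 (sub_ne_zero.2 (ne_one_of_mem_unitDisk hz).symm))
    (normSq_pos.2 (sub_ne_zero.2 (ne_one_of_mem_unitDisk (hmaps hz)).symm))]
  linarith

lemma tendsto_cayley_sub_cayley_div_of_remainder (hmaps : MapsTo f unitDisk unitDisk)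
    (hE : Tendsto E (𝓝[<] 1) (𝓝 0)) (hfE : ∀ᶠ r : ℝ in 𝓝[<] 1, f r - r = E r * (1 - r) ^ 3) :
    Tendsto (fun r : ℝ => (cayley (f r) - cayley r) / (1 - r)) (𝓝[<] 1) (𝓝 0) := by
  have h : Tendsto (fun r : ℝ => 2 * E r / (1 - E r * (1 - r) ^ 2)) (𝓝[<] 1) (𝓝 0) := by
    convert (hE.const_mul 2).div (tendsto_const_nhds (x := (1 : ℂ)).sub
      (hE.mul (tendsto_one_sub_ofReal_nhdsLT_one.pow 2))) (by simp) using 2 <;> simp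
  refine h.congr' ?_
  filter_upwards [eventually_ofReal_mem_unitDisk, hfE] with r hr hr'
  have hr1 : (1 : ℂ) - r ≠ 0 := sub_ne_zero.2 (ne_one_of_mem_unitDisk hr).symm
  have hfr : 1 - f r = (1 - r) * (1 - E r * (1 - r) ^ 2) := by linear_combination -hr'
  have hne : 1 - E r * (1 - r) ^ 2 ≠ 0 := fun h =>
    ne_one_of_mem_unitDisk (hmaps hr) (by linear_combination -hfr - (1 - (r : ℂ)) * h)
  rw [cayley_sub_cayley (ne_one_of_mem_unitDisk (hmaps hr)) (ne_one_of_mem_unitDisk hr), hr', hfr]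
  field_simp

end Radial

/-- **The boundary Schwarz lemma of Burns and Krantz.**
If `f : 𝔻 → 𝔻` is holomorphic and `f(z) = z + o(|1-z|³)` as `z → 1` in `𝔻`
(unrestricted approach), then `f(z) = z` for all `z ∈ 𝔻`. -/
theorem burns_krantz
    (f : ℂ → ℂ) (hf : DifferentiableOn ℂ f unitDisk)
    (hmaps : Set.MapsTo f unitDisk unitDisk)
    (ho : Tendsto (fun z => (f z - z) / ((‖1 - z‖ : ℂ)) ^ 3)
      (nhdsWithin 1 unitDisk) (𝓝 0)) :
    ∀ z ∈ unitDisk, f z = z := by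
  obtain ⟨E, hE, hfE⟩ := exists_radial_remainder ho
  have hre (z : ℂ) (hz : z ∈ unitDisk) : 0 ≤ (cayley (f z) - cayley z).re := by
    rw [sub_re, sub_nonneg]
    exact re_cayley_le_re_cayley_of_remainder hf hmaps hE hfE hz
  intro z hz
  have hQ := eq_zero_of_re_nonneg_of_tendsto
    ((differentiableOn_cayley.comp hf hmaps).sub differentiableOn_cayley) hre
    (tendsto_cayley_sub_cayley_div_of_remainder hmaps hE hfE) hz
  exact (cayley_inj (ne_one_of_mem_unitDisk (hmaps hz)) (ne_one_of_mem_unitDisk hz)).1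
    (sub_eq_zero.1 hQ)
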